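/- Let T : l∞ → l∞ be a continuous positive linear map with adjoint T*, and let Δ(T*) = { p ∈ Δ : there exists λ ∈ ℝ with ⟨T(x), p⟩ = λ·⟨x, p⟩ for all x ∈ l∞ }. (i) If a binary relation ≿ on l∞ satisfies axioms (A1)–(A5), ISU, and ITIS, then there exists a nonempty weak*-closed set D ⊆ Δ(T*) such that I(x) = min_{p∈D} ⟨x,p⟩ is the unique constant equivalent representing ≿. (ii) Conversely, if ⟨1, T*(p)⟩ ≤ 1 for every p ∈ Δ(T*) and I(x) = min_{p∈D} ⟨x,p⟩ for some nonempty weak*-closed D ⊆ Δ(T*), then the relation ≿ represented by I satisfies axioms (A1)–(A5), ISU, and ITIS. -/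

import Mathlib

open scoped ENNReal BoundedContinuousFunction

noncomputable section

/-- `l∞`: the Banach space of bounded real sequences with the sup norm. -/
abbrev Linf : Type := BoundedContinuousFunction ℕ ℝ

/-- `ba(ℕ)`: the norm dual of `l∞`, endowed with the weak* topology. -/
abbrev Ba : Type := WeakDual ℝ Linf

/-- The constant sequence `(θ, θ, ...)`. -/
def cst (θ : ℝ) : Linf := BoundedContinuousFunction.const ℕ θ

/-- Build an element of `l∞` from a bounded sequence. -/
def ofSeq (f : ℕ → ℝ) (C : ℝ) (h : ∀ n, |f n| ≤ C) : Linf :=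
  BoundedContinuousFunction.ofNormedAddCommGroupDiscrete f C
    (by simpa [Real.norm_eq_abs] using h)

/-- The delayed sequence `(0, d₀, d₁, d₂, ...)`. -/
def delaySeq (d : Linf) : Linf :=
  ofSeq (fun n => if n = 0 then 0 else d (n - 1)) ‖d‖ (by
    intro n
    by_cases h : n = 0
    · simp [h]
    · simpa [h, Real.norm_eq_abs] using d.norm_coe_le_norm (n - 1))

/-- The shifted sequence `(x₁, x₂, x₃, ...)`. -/
def shiftSeq (x : Linf) : Linf :=
  x.compContinuous ⟨fun n => n + 1, continuous_of_discreteTopology⟩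

/-- The permuted sequence `x_σ = (x_{σ 0}, x_{σ 1}, ...)`. -/
def permSeq (σ : Equiv.Perm ℕ) (x : Linf) : Linf :=
  x.compContinuous ⟨fun n => σ n, continuous_of_discreteTopology⟩

/-- The indicator sequence of a set `A ⊆ ℕ`. -/
def indic (A : Set ℕ) : Linf :=
  ofSeq (A.indicator fun _ => (1 : ℝ)) 1 (by
    intro n
    by_cases h : n ∈ A
    · simp [Set.indicator_of_mem h]
    · simp [Set.indicator_of_notMem h])

/-- `kEx`: the sequence equal to `k` on `E` and to `x` off `E`. -/
def patch (k : ℝ) (E : Set ℕ) (x : Linf) : Linf :=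
  ofSeq (fun n => E.indicator (fun _ => k) n + Eᶜ.indicator (fun m => x m) n)
    (|k| + ‖x‖) (by
    intro n
    by_cases h : n ∈ E
    · simp only [Set.indicator_of_mem h, Set.indicator_of_notMem (by simpa using h :
        n ∉ Eᶜ), add_zero]
      exact le_add_of_le_of_nonneg le_rfl (norm_nonneg x)
    · simp only [Set.indicator_of_notMem h, Set.indicator_of_mem (by simpa using h :
        n ∈ Eᶜ), zero_add]
      calc |x n| ≤ ‖x‖ := by simpa [Real.norm_eq_abs] using x.norm_coe_le_norm n
      _ ≤ |k| + ‖x‖ := le_add_of_nonneg_left (abs_nonneg k))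

/-- The exponential discounted sum `(1-δ) ∑ δ^t x_t` (convention `0^0 = 1`). -/
def discSum (δ : ℝ) (x : Linf) : ℝ := (1 - δ) * ∑' t, δ ^ t * x t

/-! ### Axioms -/

/-- The strict (asymmetric) part of a relation. -/
def SPref (R : Linf → Linf → Prop) (x y : Linf) : Prop := R x y ∧ ¬ R y x

/-- (A1) Weak order: complete and transitive. -/
def A1 (R : Linf → Linf → Prop) : Prop :=
  (∀ x y, R x y ∨ R y x) ∧ ∀ x y z, R x y → R y z → R x z

/-- (A2) Monotonicity. -/
def A2 (R : Linf → Linf → Prop) : Prop :=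
  (∀ x y : Linf, (∀ n, y n ≤ x n) → R x y) ∧ SPref R (cst 1) (cst 0)

/-- (A3) Continuity. -/
def A3 (R : Linf → Linf → Prop) : Prop := ∀ x y z : Linf,
  IsClosed {α : ℝ | α ∈ Set.Icc (0 : ℝ) 1 ∧ R (α • x + (1 - α) • z) y} ∧
  IsClosed {α : ℝ | α ∈ Set.Icc (0 : ℝ) 1 ∧ R y (α • x + (1 - α) • z)}

/-- (A4) Invariance with respect to a common reference point. -/
def A4 (R : Linf → Linf → Prop) : Prop :=
  ∀ x y : Linf, ∀ θ : ℝ, R x y → R (x + cst θ) (y + cst θ)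

/-- (A5) Convexity. -/
def A5 (R : Linf → Linf → Prop) : Prop :=
  ∀ x y : Linf, ∀ θ lam : ℝ, lam ∈ Set.Icc (0 : ℝ) 1 →
    R x (cst θ) → R y (cst θ) → R (lam • x + (1 - lam) • y) (cst θ)

/-- Axioms (A1)-(A5) together. -/
def A15 (R : Linf → Linf → Prop) : Prop := A1 R ∧ A2 R ∧ A3 R ∧ A4 R ∧ A5 R

/-- (MC) Monotone continuity. -/
def MC (R : Linf → Linf → Prop) : Prop :=
  ∀ (x : Linf) (θ : ℝ), SPref R x (cst θ) →
    ∀ E : ℕ → Set ℕ, (∀ n, E (n + 1) ⊆ E n) → (⋂ n, E n) = ∅ →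
      ∀ k : ℝ, ∃ n₀ : ℕ, SPref R (patch k (E n₀) x) (cst θ)

/-- (IDIS) Invariance with respect to delaying improving sequences. -/
def IDIS (R : Linf → Linf → Prop) : Prop :=
  ∀ x d : Linf, R (x + d) x → R (x + delaySeq d) x

/-- (ISU) Invariance with respect to the scale of utils. -/
def ISU (R : Linf → Linf → Prop) : Prop :=
  ∀ x y : Linf, ∀ α : ℝ, 0 ≤ α → R x y → R (α • x) (α • y)

/-- (IOU) Invariance with respect to individual origins of utilities. -/
def IOU (R : Linf → Linf → Prop) : Prop :=
  ∀ x y z : Linf, (R x y ∧ R y x) → (R (x + z) (y + z) ∧ R (y + z) (x + z))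

/-- Strong monotonicity. -/
def StrongMono (R : Linf → Linf → Prop) : Prop :=
  (∀ x y : Linf, (∀ n, y n ≤ x n) → R x y) ∧
  ∀ x y : Linf, (∀ n, y n ≤ x n) → x ≠ y → SPref R x y

/-- (ITIS) Invariance with respect to applying `T` to improving sequences. -/
def ITIS (T : Linf → Linf) (R : Linf → Linf → Prop) : Prop :=
  ∀ x d : Linf, R (x + d) x → R (x + T d) x

/-- Time invariance: `x ∼ (x₁, x₂, x₃, ...)`. -/
def TimeInv (R : Linf → Linf → Prop) : Prop :=
  ∀ x : Linf, R x (shiftSeq x) ∧ R (shiftSeq x) x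

/-- `I` is a constant equivalent for `≿`: `x ∼ I(x)` for every `x`. -/
def ConstEquiv (R : Linf → Linf → Prop) (I : Linf → ℝ) : Prop :=
  ∀ x, R x (cst (I x)) ∧ R (cst (I x)) x

/-- `I` represents `≿`: `x ≿ y ↔ I(x) ≥ I(y)`. -/
def Represents (R : Linf → Linf → Prop) (I : Linf → ℝ) : Prop :=
  ∀ x y, R x y ↔ I y ≤ I x

/-! ### Discount structures -/

/-- A functional `p ∈ ba(ℕ)` is positive. -/
def IsPos (p : Ba) : Prop := ∀ x : Linf, (∀ n, 0 ≤ x n) → 0 ≤ p x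

/-- `Δ`: the set of discount structures. -/
def Delta : Set Ba := {p | IsPos p ∧ p (cst 1) = 1}

/-- `Δ^σ`: countably additive discount structures. -/
def DeltaSigma : Set Ba :=
  {p ∈ Delta | ∃ f : ℕ → ℝ, (∀ n, 0 ≤ f n) ∧ Summable f ∧ (∑' n, f n) = 1 ∧
    ∀ x : Linf, p x = ∑' n, f n * x n}

/-- `ℬ`: the set of Banach–Mazur limits. -/
def BM : Set Ba := {p ∈ Delta | ∀ x : Linf, p (shiftSeq x) = p x}

/-- The exponential discounting functionals with parameter `δ ∈ [0,1)`. -/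
def Geom : Set Ba := {p | ∃ δ ∈ Set.Ico (0 : ℝ) 1, ∀ x : Linf, p x = discSum δ x}

/-- `Δ(T*)`: discount structures that are eigenvectors of the adjoint of `T`,
expressed via the duality `⟨T x, p⟩ = λ ⟨x, p⟩`. -/
def DeltaT (T : Linf → Linf) : Set Ba :=
  {p ∈ Delta | ∃ lam : ℝ, ∀ x : Linf, p (T x) = lam * p x}

/-- A map `T : l∞ → l∞` is positive. -/
def PosMap (T : Linf → Linf) : Prop :=
  ∀ x : Linf, (∀ n, 0 ≤ x n) → ∀ n, 0 ≤ T x n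

/-- `ca(ℕ)`: countably additive elements of `ba(ℕ)`. -/
def caSet : Set Ba :=
  {μ | ∀ A : ℕ → Set ℕ, (∀ n, A (n + 1) ⊆ A n) → (⋂ n, A n) = ∅ →
    Filter.Tendsto (fun n => μ (indic (A n))) Filter.atTop (nhds 0)}

/-- `pa(ℕ)`: purely finitely additive elements of `ba(ℕ)`. -/
def paSet : Set Ba := {μ | ∀ n : ℕ, μ (indic {n}) = 0}

/-- `c` is grounded on `D`. -/
def Grounded (D : Set Ba) (c : Ba → ℝ≥0∞) : Prop := (⨅ p ∈ D, c p) = 0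

/-- `c` is grounded on `[0,1]`. -/
def Grounded01 (c : ℝ → ℝ≥0∞) : Prop := (⨅ δ ∈ Set.Icc (0 : ℝ) 1, c δ) = 0

/-- Maxmin form: `I(x) = min_{p ∈ D} ⟨x,p⟩`, the minimum being attained. -/
def MinForm (D : Set Ba) (I : Linf → ℝ) : Prop :=
  ∀ x, (∃ p ∈ D, I x = p x) ∧ ∀ p ∈ D, I x ≤ p x

/-- Variational form: `I(x) = min_{p ∈ D} {⟨x,p⟩ + c(p)}`, the minimum being attained. -/
def VarMinForm (D : Set Ba) (c : Ba → ℝ≥0∞) (I : Linf → ℝ) : Prop :=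
  ∀ x, (∃ p ∈ D, (I x : EReal) = (p x : EReal) + (c p : EReal)) ∧
    ∀ p ∈ D, (I x : EReal) ≤ (p x : EReal) + (c p : EReal)

/-- Maxmin discounting form over a set of discount factors `E ⊆ [0,1)`. -/
def MinDelta (E : Set ℝ) (I : Linf → ℝ) : Prop :=
  ∀ x, (∃ δ ∈ E, I x = discSum δ x) ∧ ∀ δ ∈ E, I x ≤ discSum δ x

/-- Variational discounting form over discount factors. -/
def VarMinDelta (E : Set ℝ) (c : ℝ → ℝ≥0∞) (I : Linf → ℝ) : Prop :=
  ∀ x, (∃ δ ∈ E, (I x : EReal) = (discSum δ x : EReal) + (c δ : EReal)) ∧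
    ∀ δ ∈ E, (I x : EReal) ≤ (discSum δ x : EReal) + (c δ : EReal)

/-- Convexity for `ℝ≥0∞`-valued functions on a subset of `ba(ℕ)`. -/
def ConvexENN (D : Set Ba) (g : Ba → ℝ≥0∞) : Prop :=
  ∀ p ∈ D, ∀ q ∈ D, ∀ a b : ℝ, 0 ≤ a → 0 ≤ b → a + b = 1 →
    g (a • p + b • q) ≤ ENNReal.ofReal a * g p + ENNReal.ofReal b * g q



/-!
(i) By (A3) and the connectedness of an interval every `x` has a constant equivalent `I x`; with
(A1), (A2), (A4) and ISU it represents `≿`, and (A5) makes it superadditive, so `I` is a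
monotone, positively homogeneous, superadditive normalised functional. For each `x`, Hahn–Banach
shows that the discount structures `p ≥ I` with `⟨x, p⟩ = I x` form a nonempty, weak*-compact,
convex set, and ITIS makes it invariant under the normalised adjoint `p ↦ T* p / ⟨T 1, p⟩`.
An eigenvector of `T*` in that set is obtained as a weak* cluster point of averages
`∑_{n<N} μ⁻ⁿ (T*)ⁿ p`, with `μ` slightly below the exponential growth rate of `⟨Tⁿ 1, p⟩`
(so the weights diverge) and `N` chosen where the last weight is small compared to their sum.
So `D = {p ∈ Δ(T*) | p ≥ I}` works.

(ii) A minimum over `D ⊆ Δ(T*)` is monotone, homogeneous, superadditive and 1-Lipschitz, and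
ITIS holds since `⟨T d, p⟩ = λ ⟨d, p⟩` with `λ = ⟨T 1, p⟩ ∈ [0, 1]`.
-/

open Finset Filter Topology

@[simp] lemma cst_apply (θ : ℝ) (n : ℕ) : cst θ n = θ := rfl

lemma smul_cst (a θ : ℝ) : a • cst θ = cst (a * θ) := rfl

lemma cst_add_cst (a b : ℝ) : cst a + cst b = cst (a + b) := rfl

lemma abs_apply_le_norm (x : Linf) (n : ℕ) : |x n| ≤ ‖x‖ := by
  simpa using x.norm_coe_le_norm n

section NonnegFunctional

variable {F : Type*} [FunLike F Linf ℝ] [LinearMapClass F ℝ Linf ℝ]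

lemma map_cst (ℓ : F) (θ : ℝ) : ℓ (cst θ) = θ * ℓ (cst 1) := by
  rw [← smul_eq_mul, ← map_smul, smul_cst, mul_one]

lemma abs_map_le_of_nonneg (ℓ : F) (hℓ : ∀ x : Linf, (∀ n, 0 ≤ x n) → 0 ≤ ℓ x) (x : Linf) :
    |ℓ x| ≤ ℓ (cst 1) * ‖x‖ := by
  have hsub := hℓ (cst ‖x‖ - x) fun n => by simpa using (abs_le.1 (abs_apply_le_norm x n)).2
  have hadd := hℓ (cst ‖x‖ + x) fun n => by
    simpa [neg_le_iff_add_nonneg'] using (abs_le.1 (abs_apply_le_norm x n)).1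
  rw [map_sub, map_cst] at hsub
  rw [map_add, map_cst] at hadd
  exact abs_le.2 ⟨by linarith, by linarith⟩

lemma abs_apply_le_norm_of_mem_delta {p : Ba} (hp : p ∈ Delta) (x : Linf) : |p x| ≤ ‖x‖ := by
  simpa [hp.2] using abs_map_le_of_nonneg p hp.1 x

end NonnegFunctional

def Ba.ofNonneg (ℓ : Linf →ₗ[ℝ] ℝ) (hℓ : ∀ x : Linf, (∀ n, 0 ≤ x n) → 0 ≤ ℓ x) : Ba :=
  ℓ.mkContinuous (ℓ (cst 1)) fun x => by
    simpa only [Real.norm_eq_abs] using abs_map_le_of_nonneg ℓ hℓ x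

@[simp] lemma Ba.add_apply (p q : Ba) (x : Linf) : (p + q) x = p x + q x := rfl

@[simp] lemma Ba.smul_apply (a : ℝ) (p : Ba) (x : Linf) : (a • p) x = a * p x := rfl

lemma Ba.sum_apply (s : Finset ℕ) (p : ℕ → Ba) (x : Linf) :
    (∑ n ∈ s, p n) x = ∑ n ∈ s, p n x :=
  _root_.sum_apply (F := Linf →L[ℝ] ℝ) _ _ _

lemma isClosed_delta : IsClosed Delta := by
  simp only [Delta, IsPos, Set.ofPred_and, Set.ofPred_forall]
  exact (isClosed_iInter fun x => isClosed_iInter fun _ =>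
    isClosed_le continuous_const (WeakDual.eval_continuous x)).inter
    (isClosed_eq (WeakDual.eval_continuous _) continuous_const)

lemma isCompact_delta : IsCompact Delta := by
  refine (WeakDual.isCompact_closedBall (0 : StrongDual ℝ Linf) 1).of_isClosed_subset
    isClosed_delta fun p hp => ?_
  simpa using ContinuousLinearMap.opNorm_le_bound (WeakDual.toStrongDual p) zero_le_one
    fun x => by simpa using abs_apply_le_norm_of_mem_delta hp x

lemma convex_delta : Convex ℝ Delta := by
  rintro p ⟨hp, hp1⟩ q ⟨hq, hq1⟩ a b ha hb hab
  refine ⟨fun x hx => ?_, ?_⟩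
  · simpa using add_nonneg (mul_nonneg ha (hp x hx)) (mul_nonneg hb (hq x hx))
  · simp [hp1, hq1, hab]

lemma mem_deltaT_iff {T : Linf → Linf} {p : Ba} :
    p ∈ DeltaT T ↔ p ∈ Delta ∧ ∀ x, p (T x) = p (T (cst 1)) * p x := by
  refine ⟨fun ⟨hp, lam, hlam⟩ => ⟨hp, fun x => ?_⟩, fun ⟨hp, h⟩ => ⟨hp, _, h⟩⟩
  rw [hlam, hlam, hp.2, mul_one]

lemma isClosed_deltaT (T : Linf → Linf) : IsClosed (DeltaT T) := by
  have : DeltaT T = Delta ∩ ⋂ x, {p : Ba | p (T x) = p (T (cst 1)) * p x} := by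
    ext p; simp [mem_deltaT_iff]
  rw [this]
  exact isClosed_delta.inter (isClosed_iInter fun x => isClosed_eq (WeakDual.eval_continuous _)
    ((WeakDual.eval_continuous _).mul (WeakDual.eval_continuous x)))

/-- The functionals `I(x) = min_{p ∈ D} ⟨x, p⟩` with `D ⊆ Δ`, characterised intrinsically. -/
structure IsMaxminFunctional (I : Linf → ℝ) : Prop where
  apply_cst : ∀ θ, I (cst θ) = θ
  mono : ∀ x y : Linf, (∀ n, y n ≤ x n) → I y ≤ I x
  smul : ∀ (a : ℝ) (x : Linf), 0 ≤ a → I (a • x) = a * I x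
  superadditive : ∀ x y, I x + I y ≤ I (x + y)

def core (I : Linf → ℝ) : Set Ba := {p ∈ Delta | ∀ y, I y ≤ p y}

def superdifferential (I : Linf → ℝ) (x : Linf) : Set Ba := {p ∈ core I | p x = I x}

lemma isClosed_core (I : Linf → ℝ) : IsClosed (core I) := by
  simp only [core, Set.ofPred_and, Set.ofPred_forall, Set.ofPred_mem_eq]
  exact isClosed_delta.inter (isClosed_iInter fun y =>
    isClosed_le continuous_const (WeakDual.eval_continuous y))

lemma isCompact_superdifferential (I : Linf → ℝ) (x : Linf) : IsCompact (superdifferential I x) :=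
  isCompact_delta.of_isClosed_subset
    ((isClosed_core I).inter (isClosed_eq (WeakDual.eval_continuous x) continuous_const))
    fun _ hp => hp.1.1

lemma convex_superdifferential (I : Linf → ℝ) (x : Linf) : Convex ℝ (superdifferential I x) := by
  rintro p ⟨⟨hpΔ, hpI⟩, hpx⟩ q ⟨⟨hqΔ, hqI⟩, hqx⟩ a b ha hb hab
  refine ⟨⟨convex_delta hpΔ hqΔ ha hb hab, fun y => ?_⟩, ?_⟩
  · calc I y = a * I y + b * I y := by rw [← add_mul, hab, one_mul]
      _ ≤ (a • p + b • q) y := by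
        simpa using add_le_add (mul_le_mul_of_nonneg_left (hpI y) ha)
          (mul_le_mul_of_nonneg_left (hqI y) hb)
  · simp [hpx, hqx, ← add_mul, hab]

namespace IsMaxminFunctional

variable {I : Linf → ℝ} (hI : IsMaxminFunctional I)
include hI

lemma map_zero : I 0 = 0 := hI.apply_cst 0

lemma map_add_cst (x : Linf) (θ : ℝ) : I (x + cst θ) = I x + θ := by
  have hle := hI.superadditive (x + cst θ) (cst (-θ))
  have hge := hI.superadditive x (cst θ)
  rw [add_assoc, cst_add_cst, add_neg_cancel, show cst 0 = 0 from rfl, add_zero,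
    hI.apply_cst] at hle
  rw [hI.apply_cst] at hge
  linarith

lemma add_map_neg_nonpos (x : Linf) : I x + I (-x) ≤ 0 := by
  simpa [hI.map_zero] using hI.superadditive x (-x)

/-- Hahn–Banach, applied to the sublinear functional `y ↦ -I(-y)` and the line through `x`. -/
lemma superdifferential_nonempty (x : Linf) : (superdifferential I x).Nonempty := by
  set N : Linf → ℝ := fun y => -I (-y)
  have N_smul : ∀ c : ℝ, 0 < c → ∀ y, N (c • y) = c * N y := fun c hc y => by
    simp only [N]
    rw [show -(c • y) = c • -y from (smul_neg c y).symm, hI.smul c _ hc.le, mul_neg]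
  have N_add : ∀ y z, N (y + z) ≤ N y + N z := fun y z => by
    have := hI.superadditive (-y) (-z)
    rw [← neg_add] at this
    simp only [N]
    linarith
  have hline : ∀ c : ℝ, c • x = 0 → RingHom.id ℝ c • I x = 0 := fun c hc => by
    rcases smul_eq_zero.1 hc with rfl | rfl
    · exact zero_smul _ _
    · rw [hI.map_zero, smul_zero]
  set f := LinearPMap.mkSpanSingleton' x (I x) hline
  have hf : ∀ z : f.domain, f z ≤ N z := by
    rintro ⟨z, hz⟩
    obtain ⟨c, rfl⟩ := Submodule.mem_span_singleton.1 hz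
    rw [LinearPMap.mkSpanSingleton'_apply, RingHom.id_apply, smul_eq_mul]
    rcases le_or_gt 0 c with hc | hc
    · have := hI.add_map_neg_nonpos (c • x)
      rw [hI.smul c x hc] at this
      simp only [N]; linarith
    · simp only [N, ← neg_smul, hI.smul (-c) x (by linarith)]; linarith
  obtain ⟨g, hgx, hgN⟩ := exists_extension_of_le_sublinear f N N_smul N_add hf
  have hIg : ∀ y, I y ≤ g y := fun y => by
    simpa [N] using hgN (-y)
  have hpos : ∀ y : Linf, (∀ n, 0 ≤ y n) → 0 ≤ g y := fun y hy =>
    le_trans (by simpa [hI.map_zero] using hI.mono y 0 hy) (hIg y)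
  have hg1 : g (cst 1) = 1 := by
    have := hgN (cst 1)
    simp only [N, show -cst 1 = cst (-1) from rfl, hI.apply_cst] at this
    linarith [hI.apply_cst 1 ▸ hIg (cst 1)]
  refine ⟨Ba.ofNonneg g hpos, ⟨⟨hpos, hg1⟩, hIg⟩, ?_⟩
  exact (hgx ⟨x, Submodule.mem_span_singleton_self x⟩).trans
    (LinearPMap.mkSpanSingleton'_apply_self _ _ _ _)

end IsMaxminFunctional

lemma apply_map_cst (p : Ba) (T : Linf →ₗ[ℝ] Linf) (θ : ℝ) :
    p (T (cst θ)) = θ * p (T (cst 1)) := by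
  rw [← mul_one θ, ← smul_cst, map_smul, map_smul, smul_eq_mul, mul_one]

section Invariance

variable {I : Linf → ℝ} {T : Linf →ₗ[ℝ] Linf} (hITI : ITIS T (fun x y => I y ≤ I x))
  {x : Linf} {p : Ba} (hp : p ∈ superdifferential I x)
include hITI hp

lemma apply_map_nonneg_of_le_add {d : Linf} (hd : I x ≤ I (x + d)) : 0 ≤ p (T d) := by
  have := (hITI x d hd).trans (hp.1.2 (x + T d))
  rw [map_add, hp.2] at this
  linarith

variable (hI : IsMaxminFunctional I)
include hI

lemma apply_map_one_mul_le (d : Linf) : p (T (cst 1)) * I d ≤ p (T d) := by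
  have hd : I x ≤ I (x + (d + cst (-I d))) := by
    simpa [hI.map_add_cst] using hI.superadditive x (d + cst (-I d))
  have := apply_map_nonneg_of_le_add hITI hp hd
  rw [map_add, map_add, apply_map_cst] at this
  linarith

lemma apply_map_le_apply_map_one_mul : p (T x) ≤ p (T (cst 1)) * I x := by
  have hd : I x ≤ I (x + (cst (I x) - x)) := by
    rw [add_sub_cancel, hI.apply_cst]
  have := apply_map_nonneg_of_le_add hITI hp hd
  rw [map_sub, map_sub, apply_map_cst] at this
  linarith

lemma exists_mem_superdifferential_apply_map_eq (hT : PosMap T) :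
    ∃ p' ∈ superdifferential I x, ∀ y, p (T y) = p (T (cst 1)) * p' y := by
  have hlow := apply_map_one_mul_le hITI hp hI
  have hup := apply_map_le_apply_map_one_mul hITI hp hI
  have hpT : ∀ y : Linf, (∀ n, 0 ≤ y n) → 0 ≤ p (T y) := fun y hy => hp.1.1.1 _ (hT y hy)
  rcases (hpT (cst 1) fun _ => zero_le_one).eq_or_lt with hzero | hlam
  · refine ⟨p, hp, fun y => ?_⟩
    have h1 := hlow y
    have h2 := hlow (-y)
    rw [← hzero, zero_mul] at h1 h2 ⊢
    rw [map_neg, map_neg] at h2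
    linarith
  set lam := p (T (cst 1))
  set p' := lam⁻¹ • Ba.ofNonneg (((p : Linf →L[ℝ] ℝ) : Linf →ₗ[ℝ] ℝ) ∘ₗ T) hpT
  have hp' : ∀ y, p' y = lam⁻¹ * p (T y) := fun y => rfl
  refine ⟨p', ⟨⟨⟨fun y hy => ?_, ?_⟩, fun y => ?_⟩, ?_⟩, fun y => ?_⟩
  · rw [hp']; exact mul_nonneg (inv_nonneg.2 hlam.le) (hpT y hy)
  · rw [hp', inv_mul_cancel₀ hlam.ne']
  · rw [hp', le_inv_mul_iff₀ hlam]; exact hlow y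
  · rw [hp', inv_mul_eq_iff_eq_mul₀ hlam.ne']; exact le_antisymm hup (hlow x)
  · rw [hp', mul_inv_cancel_left₀ hlam.ne']

end Invariance

section GrowthRate

lemma exists_le_mul_sum_range_of_le_geometric {t : ℕ → ℝ} (ht : ∀ n, 0 < t n) {ε r B : ℝ}
    (hε : 0 < ε) (hr : 0 < r) (hrε : r < 1 + ε) (hB : ∀ n, t n ≤ B * r ^ n) (N₀ : ℕ) :
    ∃ N, N₀ ≤ N ∧ t N ≤ ε * ∑ n ∈ range N, t n := by
  by_contra! h
  set Z : ℕ → ℝ := fun N => ∑ n ∈ range N, t n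
  have hZ_succ : ∀ N, Z (N + 1) = Z N + t N := fun N => sum_range_succ t N
  -- past `N₀` the partial sums grow geometrically with ratio `1 + ε > r`
  have hgrowth : ∀ j, (1 + ε) ^ j * Z (N₀ + 1) ≤ Z (N₀ + 1 + j) := by
    intro j
    induction j with
    | zero => simp
    | succ j ih =>
      have hstep : ε * Z (N₀ + 1 + j) < t (N₀ + 1 + j) := h _ (by omega)
      rw [← add_assoc, hZ_succ (N₀ + 1 + j), pow_succ]
      nlinarith
  have hZ₀ : 0 < Z (N₀ + 1) := by
    rw [hZ_succ]
    exact add_pos_of_nonneg_of_pos (sum_nonneg fun n _ => (ht n).le) (ht N₀)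
  obtain ⟨j, hj⟩ := pow_unbounded_of_one_lt (B * r ^ (N₀ + 1) / (ε * Z (N₀ + 1)))
    ((one_lt_div hr).2 hrε)
  have hchain : ε * ((1 + ε) ^ j * Z (N₀ + 1)) < B * r ^ (N₀ + 1) * r ^ j := by
    calc ε * ((1 + ε) ^ j * Z (N₀ + 1)) ≤ ε * Z (N₀ + 1 + j) :=
          mul_le_mul_of_nonneg_left (hgrowth j) hε.le
      _ < t (N₀ + 1 + j) := h _ (by omega)
      _ ≤ B * r ^ (N₀ + 1) * r ^ j := by rw [mul_assoc, ← pow_add]; exact hB _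
  rw [div_lt_iff₀ (by positivity), div_pow, div_mul_eq_mul_div, lt_div_iff₀ (by positivity)] at hj
  nlinarith

lemma exists_add_one_le_mul_sum_range {t : ℕ → ℝ} (ht : ∀ n, 0 < t n)
    (hunb : ∀ B, ∃ n, B < t n) {ε r B : ℝ} (hε : 0 < ε) (hr : 0 < r) (hrε : r < 1 + ε / 2)
    (hB : ∀ n, t n ≤ B * r ^ n) :
    ∃ N, t N + 1 ≤ ε * ∑ n ∈ range N, t n := by
  obtain ⟨N₀, hN₀⟩ := hunb (2 / ε)
  obtain ⟨N, hN, htN⟩ :=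
    exists_le_mul_sum_range_of_le_geometric ht (half_pos hε) hr hrε hB (N₀ + 1)
  have hsum : t N₀ ≤ ∑ n ∈ range N, t n :=
    single_le_sum (fun n _ => (ht n).le) (mem_range.2 (by omega))
  have hone : 1 ≤ ε / 2 * t N₀ := by
    rw [div_lt_iff₀ hε] at hN₀
    linarith
  exact ⟨N, by nlinarith⟩

lemma le_of_forall_pow_le_mul_pow {m σ B : ℝ} (hσ : 0 < σ) (h : ∀ n, m ^ n ≤ B * σ ^ n) :
    m ≤ σ := by
  by_contra! hσm
  obtain ⟨n, hn⟩ := pow_unbounded_of_one_lt B ((one_lt_div hσ).2 hσm)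
  rw [div_pow, lt_div_iff₀ (pow_pos hσ n)] at hn
  linarith [h n]

lemma exists_weights_of_geometric_bounds {c : ℕ → ℝ} {m L : ℝ} (hm : 0 < m)
    (hlow : ∀ n, m ^ n ≤ c n) (hup : ∀ n, c n ≤ L ^ n) :
    ∃ ρ > 0, ∀ ε > 0, ∃ μ > 0, μ ≤ ρ ∧ ρ ≤ (1 + ε) * μ ∧
      ∃ N, c N / μ ^ N + 1 ≤ ε * ∑ n ∈ range N, c n / μ ^ n := by
  -- `ρ` is the exponential growth rate of `c`
  set V := {σ : ℝ | 0 < σ ∧ ∃ B, ∀ n, c n ≤ B * σ ^ n}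
  have hmL : m ≤ L := by simpa using (hlow 1).trans (hup 1)
  have hLV : L ∈ V := ⟨hm.trans_le hmL, 1, fun n => by simpa using hup n⟩
  have hmV : ∀ σ ∈ V, m ≤ σ := fun σ ⟨hσ, B, hB⟩ =>
    le_of_forall_pow_le_mul_pow hσ fun n => (hlow n).trans (hB n)
  set ρ := sInf V
  have hρ : 0 < ρ := hm.trans_le (le_csInf ⟨L, hLV⟩ hmV)
  refine ⟨ρ, hρ, fun ε hε => ?_⟩
  set μ := ρ / (1 + ε / 4)
  have hμ : 0 < μ := by positivity
  have hρμ : ρ = (1 + ε / 4) * μ := by simp only [μ]; field_simp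
  have hμρ : μ < ρ := by rw [hρμ]; nlinarith
  obtain ⟨σ, ⟨hσ, B, hB⟩, hσμ⟩ :=
    exists_lt_of_csInf_lt ⟨L, hLV⟩ (show ρ < (1 + ε / 2) * μ by rw [hρμ]; nlinarith)
  have ht : ∀ n, 0 < c n / μ ^ n := fun n =>
    div_pos ((pow_pos hm n).trans_le (hlow n)) (pow_pos hμ n)
  have hunb : ∀ B, ∃ n, B < c n / μ ^ n := by
    intro B'
    by_contra! h
    exact hμρ.not_ge (csInf_le ⟨0, fun σ hσ => hσ.1.le⟩
      ⟨hμ, B', fun n => (div_le_iff₀ (pow_pos hμ n)).1 (h n)⟩)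
  have hgeom : ∀ n, c n / μ ^ n ≤ B * (σ / μ) ^ n := fun n =>
    calc c n / μ ^ n ≤ B * σ ^ n / μ ^ n := div_le_div_of_nonneg_right (hB n) (pow_pos hμ n).le
      _ = B * (σ / μ) ^ n := by ring
  refine ⟨μ, hμ, hμρ.le, by rw [hρμ]; nlinarith,
    exists_add_one_le_mul_sum_range ht hunb hε (div_pos hσ hμ) ?_ hgeom⟩
  rwa [div_lt_iff₀ hμ]

end GrowthRate

section Eigenvector

variable {T : Linf → Linf} {K : Set Ba}

lemma exists_eigen_of_forall_approx (hK : IsCompact K) {ρ : ℝ}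
    (h : ∀ ε > 0, ∃ q ∈ K, ∀ y, |q (T y) - ρ * q y| ≤ ε * ‖y‖) :
    ∃ q ∈ K, ∀ y, q (T y) = ρ * q y := by
  set A : ℕ → Set Ba := fun k => {q ∈ K | ∀ y, |q (T y) - ρ * q y| ≤ 1 / (k + 1) * ‖y‖}
  have hA : ∀ k, IsClosed (A k) := fun k => by
    simp only [A, Set.ofPred_and, Set.ofPred_forall, Set.ofPred_mem_eq]
    exact hK.isClosed.inter (isClosed_iInter fun y => isClosed_le
      ((WeakDual.eval_continuous _).sub (continuous_const.mul (WeakDual.eval_continuous y))).abs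
      continuous_const)
  have hanti : ∀ k, A (k + 1) ⊆ A k := fun k q ⟨hq, hqy⟩ =>
    ⟨hq, fun y => (hqy y).trans (by gcongr; linarith)⟩
  obtain ⟨q, hq⟩ := IsCompact.nonempty_iInter_of_sequence_nonempty_isCompact_isClosed A hanti
    (fun k => let ⟨q, hq, hqy⟩ := h _ (by positivity); ⟨q, hq, hqy⟩)
    (hK.of_isClosed_subset (hA 0) fun _ hq => hq.1) hA
  rw [Set.mem_iInter] at hq
  refine ⟨q, (hq 0).1, fun y => sub_eq_zero.1 (abs_nonpos_iff.1 ?_)⟩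
  have hlim : Tendsto (fun k : ℕ => 1 / ((k : ℝ) + 1) * ‖y‖) atTop (𝓝 0) := by
    simpa using tendsto_one_div_add_atTop_nhds_zero_nat.mul_const ‖y‖
  exact ge_of_tendsto' hlim fun k => (hq k).2 y

lemma exists_approx_eigen_of_weights (hKconv : Convex ℝ K) (hKΔ : K ⊆ Delta) {P : ℕ → Ba}
    (hPK : ∀ n, P n ∈ K) {w : ℕ → ℝ} (hw : ∀ n, 0 < w n) (hw0 : w 0 = 1) {μ ε : ℝ}
    (hμ : 0 ≤ μ) (hstep : ∀ n y, w n * P n (T y) = μ * (w (n + 1) * P (n + 1) y)) {N : ℕ}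
    (hN : w N + 1 ≤ ε * ∑ n ∈ range N, w n) :
    ∃ q ∈ K, ∀ y, |q (T y) - μ * q y| ≤ μ * ε * ‖y‖ := by
  obtain ⟨Z, hZdef⟩ : ∃ Z, ∑ n ∈ range N, w n = Z := ⟨_, rfl⟩
  rw [hZdef] at hN
  have hZ : 0 < Z := (hZdef ▸ sum_nonneg fun n _ => (hw n).le).lt_of_ne fun h => by
    rw [← h, mul_zero] at hN
    linarith [hw N]
  have hqK : ∑ n ∈ range N, (w n / Z) • P n ∈ K :=
    Convex.sum_mem (E := Ba) hKconv (fun n _ => (div_pos (hw n) hZ).le)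
      (by rw [← sum_div, hZdef, div_self hZ.ne']) fun n _ => hPK n
  refine ⟨_, hqK, fun y => ?_⟩
  have hq : ∀ z, (∑ n ∈ range N, (w n / Z) • P n) z = Z⁻¹ * ∑ n ∈ range N, w n * P n z :=
    fun z => by
      rw [Ba.sum_apply, mul_sum]
      exact sum_congr rfl fun n _ => by rw [Ba.smul_apply, div_eq_inv_mul, mul_assoc]
  have htel : ∑ n ∈ range N, w n * P n (T y) =
      μ * (∑ n ∈ range N, w n * P n y + w N * P N y - P 0 y) := by
    have := sum_range_succ' (fun n => w n * P n y) N
    rw [sum_range_succ, hw0, one_mul] at this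
    simp_rw [hstep, ← mul_sum]
    congr 1
    linarith
  have hPN := abs_apply_le_norm_of_mem_delta (hKΔ (hPK N)) y
  have hP0 := abs_apply_le_norm_of_mem_delta (hKΔ (hPK 0)) y
  have hdiff : |w N * P N y - P 0 y| ≤ (w N + 1) * ‖y‖ :=
    calc |w N * P N y - P 0 y| ≤ |w N * P N y| + |P 0 y| := abs_sub _ _
      _ ≤ w N * ‖y‖ + ‖y‖ := by
        rw [abs_mul, abs_of_pos (hw N)]; gcongr; exact (hw N).le
      _ = (w N + 1) * ‖y‖ := by ring
  rw [hq, hq, htel, show ∀ S a b : ℝ, Z⁻¹ * (μ * (S + a - b)) - μ * (Z⁻¹ * S) =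
    μ * Z⁻¹ * (a - b) from fun _ _ _ => by ring, abs_mul, abs_of_nonneg (by positivity)]
  calc μ * Z⁻¹ * |w N * P N y - P 0 y| ≤ μ * Z⁻¹ * ((w N + 1) * ‖y‖) := by gcongr
    _ ≤ μ * Z⁻¹ * (ε * Z * ‖y‖) := by gcongr
    _ = μ * ε * ‖y‖ := by field_simp

lemma exists_eigen_of_iterates (hK : IsCompact K) (hKconv : Convex ℝ K) (hKΔ : K ⊆ Delta)
    {P : ℕ → Ba} (hPK : ∀ n, P n ∈ K) {lam : ℕ → ℝ} {m L : ℝ} (hm : 0 < m)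
    (hlam : ∀ n, lam n ∈ Set.Icc m L) (hP : ∀ n y, P n (T y) = lam n * P (n + 1) y) :
    ∃ q ∈ K, ∃ ρ, ∀ y, q (T y) = ρ * q y := by
  have hlam₀ : ∀ n, 0 < lam n := fun n => hm.trans_le (hlam n).1
  set c : ℕ → ℝ := fun n => ∏ i ∈ range n, lam i
  have hlow : ∀ n, m ^ n ≤ c n := fun n => by
    simpa using prod_le_prod (fun _ _ => hm.le) fun i (_ : i ∈ range n) => (hlam i).1
  have hup : ∀ n, c n ≤ L ^ n := fun n => by
    simpa using prod_le_prod (fun i _ => (hlam₀ i).le) fun i (_ : i ∈ range n) => (hlam i).2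
  obtain ⟨ρ, hρ, hweights⟩ := exists_weights_of_geometric_bounds hm hlow hup
  suffices ∀ ε > 0, ∃ q ∈ K, ∀ y, |q (T y) - ρ * q y| ≤ ε * ‖y‖ by
    obtain ⟨q, hqK, hq⟩ := exists_eigen_of_forall_approx hK this
    exact ⟨q, hqK, ρ, hq⟩
  intro ε hε
  set ε' := ε / (2 * ρ)
  obtain ⟨μ, hμ, hμρ, hρμ, N, hN⟩ := hweights ε' (by positivity)
  obtain ⟨q, hqK, hq⟩ := exists_approx_eigen_of_weights (T := T) hKconv hKΔ hPK
    (fun n => div_pos (prod_pos fun i _ => hlam₀ i) (pow_pos hμ n)) (by simp) hμ.le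
    (fun n y => by simp only [hP, prod_range_succ, pow_succ]; field_simp) hN
  refine ⟨q, hqK, fun y => ?_⟩
  have hqy := abs_apply_le_norm_of_mem_delta (hKΔ hqK) y
  have hμε : μ * ε' ≤ ε / 2 := by
    rw [show μ * ε' = μ / ρ * (ε / 2) by simp only [ε']; field_simp]
    exact mul_le_of_le_one_left (by positivity) ((div_le_one hρ).2 hμρ)
  calc |q (T y) - ρ * q y| = |(q (T y) - μ * q y) - (ρ - μ) * q y| := by ring_nf
    _ ≤ |q (T y) - μ * q y| + |(ρ - μ) * q y| := abs_sub _ _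
    _ = |q (T y) - μ * q y| + (ρ - μ) * |q y| := by
      rw [abs_mul, abs_of_nonneg (sub_nonneg.2 hμρ)]
    _ ≤ μ * ε' * ‖y‖ + μ * ε' * ‖y‖ := by
      gcongr
      · exact hq y
      · linarith
    _ ≤ ε * ‖y‖ := by nlinarith [norm_nonneg y]

theorem exists_mem_deltaT_of_invariant (hT : PosMap T) (hK : IsCompact K) (hKconv : Convex ℝ K)
    (hKΔ : K ⊆ Delta) (hne : K.Nonempty)
    (hinv : ∀ p ∈ K, ∃ p' ∈ K, ∀ y, p (T y) = p (T (cst 1)) * p' y) :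
    (K ∩ DeltaT T).Nonempty := by
  by_cases hzero : ∃ p ∈ K, p (T (cst 1)) = 0
  · obtain ⟨p, hp, hp0⟩ := hzero
    obtain ⟨p', -, hp'⟩ := hinv p hp
    exact ⟨p, hp, hKΔ hp, 0, fun y => by rw [hp', hp0, zero_mul, zero_mul]⟩
  push Not at hzero
  have hpos : ∀ p ∈ K, 0 < p (T (cst 1)) := fun p hp =>
    ((hKΔ hp).1 _ (hT _ fun _ => zero_le_one)).lt_of_ne (hzero p hp).symm
  have hcont := (WeakDual.eval_continuous (T (cst 1))).continuousOn (s := K)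
  obtain ⟨pm, hpm, hmin⟩ := hK.exists_isMinOn hne hcont
  obtain ⟨pM, -, hmax⟩ := hK.exists_isMaxOn hne hcont
  choose! next hnextK hnext using hinv
  obtain ⟨p₀, hp₀⟩ := hne
  have hPK : ∀ n, next^[n] p₀ ∈ K := fun n => (Set.MapsTo.iterate hnextK n) hp₀
  obtain ⟨q, hqK, ρ, hq⟩ := exists_eigen_of_iterates hK hKconv hKΔ hPK (hpos pm hpm)
    (fun n => ⟨hmin (hPK n), hmax (hPK n)⟩)
    fun n y => by rw [hnext _ (hPK n), Function.iterate_succ_apply']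
  exact ⟨q, hqK, hKΔ hqK, ρ, hq⟩

end Eigenvector

theorem IsMaxminFunctional.minForm_core_inter_deltaT {I : Linf → ℝ} (hI : IsMaxminFunctional I)
    {T : Linf →ₗ[ℝ] Linf} (hT : PosMap T) (hITI : ITIS T (fun x y => I y ≤ I x)) :
    MinForm (core I ∩ DeltaT T) I := by
  intro x
  obtain ⟨q, hqS, hqT⟩ := exists_mem_deltaT_of_invariant hT (isCompact_superdifferential I x)
    (convex_superdifferential I x) (fun p hp => hp.1.1) (hI.superdifferential_nonempty x)
    fun p hp => exists_mem_superdifferential_apply_map_eq hITI hp hI hT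
  exact ⟨⟨q, ⟨hqS.1, hqT⟩, hqS.2.symm⟩, fun p hp => hp.1.2 x⟩

section Axioms

variable {R : Linf → Linf → Prop}

lemma le_of_rel_cst (h2 : A2 R) (h4 : A4 R) (hisu : ISU R) {a b : ℝ}
    (h : R (cst a) (cst b)) : b ≤ a := by
  by_contra! hab
  have hs : 0 < b - a := sub_pos.2 hab
  have := h4 _ _ (-(a / (b - a))) (hisu _ _ (b - a)⁻¹ (inv_nonneg.2 hs.le) h)
  rw [smul_cst, smul_cst, cst_add_cst, cst_add_cst, ← div_eq_inv_mul, ← div_eq_inv_mul,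
    add_neg_cancel, ← sub_eq_add_neg, div_sub_div_same, div_self hs.ne'] at this
  exact h2.2.2 this

lemma isClosed_setOf_mem_Icc_and_cst {P : Linf → Prop} {M : ℝ} (hM : 0 < M)
    (hP : IsClosed {α : ℝ | α ∈ Set.Icc (0 : ℝ) 1 ∧ P (α • cst M + (1 - α) • cst (-M))}) :
    IsClosed {θ : ℝ | θ ∈ Set.Icc (-M) M ∧ P (cst θ)} := by
  have hmix : ∀ θ, ((θ + M) / (2 * M)) • cst M + (1 - (θ + M) / (2 * M)) • cst (-M) = cst θ :=
    fun θ => by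
      rw [smul_cst, smul_cst, cst_add_cst]
      congr 1
      field_simp
      ring
  convert hP.preimage (by fun_prop : Continuous fun θ : ℝ => (θ + M) / (2 * M)) using 1
  ext θ
  simp only [Set.mem_ofPred_eq, Set.mem_preimage, hmix, Set.mem_Icc,
    le_div_iff₀ (by positivity : (0 : ℝ) < 2 * M), div_le_one (by positivity : (0 : ℝ) < 2 * M)]
  constructor <;> rintro ⟨⟨h1, h2⟩, h3⟩ <;> exact ⟨⟨by linarith, by linarith⟩, h3⟩

/-- The sets of constants below and above `x` are closed by (A3) and cover the connected
interval `[-‖x‖ - 1, ‖x‖ + 1]`, so they meet. -/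
lemma exists_rel_cst_and_rel_cst (h1 : A1 R) (h2 : A2 R) (h3 : A3 R) (x : Linf) :
    ∃ θ, R x (cst θ) ∧ R (cst θ) x := by
  set M := ‖x‖ + 1
  have hM : 0 < M := by positivity
  have hx : ∀ n, -M ≤ x n ∧ x n ≤ M := fun n =>
    abs_le.1 ((abs_apply_le_norm x n).trans (by linarith))
  obtain ⟨θ, -, ⟨-, hxθ⟩, -, hθx⟩ := isPreconnected_closed_iff.1 isPreconnected_Icc _ _
    (isClosed_setOf_mem_Icc_and_cst (P := fun z => R x z) hM (h3 (cst M) x (cst (-M))).2)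
    (isClosed_setOf_mem_Icc_and_cst (P := fun z => R z x) hM (h3 (cst M) x (cst (-M))).1)
    (fun θ hθ => (h1.1 x (cst θ)).imp (⟨hθ, ·⟩) (⟨hθ, ·⟩))
    ⟨-M, Set.left_mem_Icc.2 (by linarith), Set.left_mem_Icc.2 (by linarith),
      h2.1 _ _ fun n => (hx n).1⟩
    ⟨M, Set.right_mem_Icc.2 (by linarith), Set.right_mem_Icc.2 (by linarith),
      h2.1 _ _ fun n => (hx n).2⟩
  exact ⟨θ, hxθ, hθx⟩

lemma exists_constEquiv (h1 : A1 R) (h2 : A2 R) (h3 : A3 R) : ∃ I, ConstEquiv R I := by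
  choose I hI using exists_rel_cst_and_rel_cst h1 h2 h3
  exact ⟨I, hI⟩

lemma Represents.rel_eq {I : Linf → ℝ} (h : Represents R I) : R = fun x y => I y ≤ I x :=
  funext₂ fun x y => propext (h x y)

namespace ConstEquiv

variable {I : Linf → ℝ} (hI : ConstEquiv R I) (h1 : A1 R)
  (hcst : ∀ a b, R (cst a) (cst b) → b ≤ a)
include hI h1 hcst

lemma eq_of_rel {x : Linf} {a : ℝ} (hxa : R x (cst a)) (hax : R (cst a) x) : I x = a :=
  le_antisymm (hcst _ _ (h1.2 _ _ _ hax (hI x).1)) (hcst _ _ (h1.2 _ _ _ (hI x).2 hxa))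

lemma unique {J : Linf → ℝ} (hJ : ConstEquiv R J) : J = I :=
  funext fun x => (hI.eq_of_rel h1 hcst (hJ x).1 (hJ x).2).symm

lemma represents (h2 : A2 R) : Represents R I := fun x y =>
  ⟨fun h => hcst _ _ (h1.2 _ _ _ (hI x).2 (h1.2 _ _ _ h (hI y).1)),
    fun h => h1.2 _ _ _ (hI x).1 (h1.2 _ _ _ (h2.1 _ _ fun _ => h) (hI y).2)⟩

lemma isMaxminFunctional (h2 : A2 R) (h4 : A4 R) (h5 : A5 R) (hisu : ISU R) :
    IsMaxminFunctional I := by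
  have hrep := hI.represents h1 hcst h2
  have hrefl : ∀ z, R z z := fun z => h2.1 _ _ fun _ => le_rfl
  have hcst_eq : ∀ θ, I (cst θ) = θ := fun θ => hI.eq_of_rel h1 hcst (hrefl _) (hrefl _)
  have hsmul : ∀ (a : ℝ) x, 0 ≤ a → I (a • x) = a * I x := fun a x ha =>
    hI.eq_of_rel h1 hcst (a := a * I x) (hisu _ _ a ha (hI x).1) (hisu _ _ a ha (hI x).2)
  have hadd : ∀ x θ, I (x + cst θ) = I x + θ := fun x θ =>
    hI.eq_of_rel h1 hcst (a := I x + θ) (h4 _ _ θ (hI x).1) (h4 _ _ θ (hI x).2)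
  refine ⟨hcst_eq, fun x y hxy => (hrep x y).1 (h2.1 x y hxy), hsmul, fun x y => ?_⟩
  -- shift `x` and `y` to the common level `(I x + I y) / 2` and average them with (A5)
  have hx : R (x + cst ((I y - I x) / 2)) (cst ((I x + I y) / 2)) := (hrep _ _).2 (by
    rw [hcst_eq, hadd]; linarith)
  have hy : R (y + cst ((I x - I y) / 2)) (cst ((I x + I y) / 2)) := (hrep _ _).2 (by
    rw [hcst_eq, hadd]; linarith)
  have hmid := (hrep _ _).1 (h5 _ _ _ (1 / 2) ⟨by norm_num, by norm_num⟩ hx hy)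
  have heq : (1 / 2 : ℝ) • (x + cst ((I y - I x) / 2)) +
      (1 - 1 / 2 : ℝ) • (y + cst ((I x - I y) / 2)) = (1 / 2 : ℝ) • (x + y) := by
    ext n
    simp only [BoundedContinuousFunction.coe_add, BoundedContinuousFunction.coe_smul,
      Pi.add_apply, smul_eq_mul, cst_apply]
    ring
  have := hmid.trans_eq (congrArg I heq)
  rw [hcst_eq, hsmul _ _ (by norm_num)] at this
  linarith

end ConstEquiv

end Axioms

namespace IsMaxminFunctional

variable {I : Linf → ℝ} (hI : IsMaxminFunctional I)
include hI

lemma a15 (hc : Continuous I) : A15 (fun x y => I y ≤ I x) := by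
  refine ⟨⟨fun x y => le_total _ _, fun x y z hxy hyz => hyz.trans hxy⟩,
    ⟨hI.mono, ?_, ?_⟩, fun x y z => ⟨?_, ?_⟩, fun x y θ hxy => ?_,
    fun x y θ lam hlam hx hy => ?_⟩
  · simp [hI.apply_cst]
  · simp [hI.apply_cst]
  · exact isClosed_Icc.inter (isClosed_le continuous_const (hc.comp (by fun_prop)))
  · exact isClosed_Icc.inter (isClosed_le (hc.comp (by fun_prop)) continuous_const)
  · simpa [hI.map_add_cst] using hxy
  · simp only [hI.apply_cst] at hx hy ⊢
    calc θ = lam * θ + (1 - lam) * θ := by ring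
      _ ≤ lam * I x + (1 - lam) * I y := by
        gcongr
        · exact hlam.1
        · exact sub_nonneg.2 hlam.2
      _ = I (lam • x) + I ((1 - lam) • y) := by
        rw [hI.smul _ _ hlam.1, hI.smul _ _ (sub_nonneg.2 hlam.2)]
      _ ≤ I (lam • x + (1 - lam) • y) := hI.superadditive _ _

lemma isu : ISU (fun x y => I y ≤ I x) := fun x y a ha hxy => by
  simp only [hI.smul a _ ha]
  exact mul_le_mul_of_nonneg_left hxy ha

end IsMaxminFunctional

namespace MinForm

variable {D : Set Ba} {I : Linf → ℝ} (h : MinForm D I)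
include h

lemma isMaxminFunctional (hD : D ⊆ Delta) : IsMaxminFunctional I where
  apply_cst θ := by
    obtain ⟨p, hp, hpθ⟩ := (h (cst θ)).1
    rw [hpθ, map_cst, (hD hp).2, mul_one]
  mono x y hxy := by
    obtain ⟨p, hp, hpx⟩ := (h x).1
    have := (hD hp).1 (x - y) fun n => by simpa using hxy n
    rw [map_sub] at this
    linarith [(h y).2 p hp]
  smul a x ha := by
    obtain ⟨p, hp, hpx⟩ := (h x).1
    obtain ⟨q, hq, hqx⟩ := (h (a • x)).1
    rw [map_smul, smul_eq_mul] at hqx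
    refine le_antisymm ?_ (hqx ▸ mul_le_mul_of_nonneg_left ((h x).2 q hq) ha)
    simpa [hpx] using (h (a • x)).2 p hp
  superadditive x y := by
    obtain ⟨p, hp, hpxy⟩ := (h (x + y)).1
    rw [hpxy, map_add]
    exact add_le_add ((h x).2 p hp) ((h y).2 p hp)

lemma lipschitzWith_one (hD : D ⊆ Delta) : LipschitzWith 1 I := by
  refine LipschitzWith.of_le_add fun x y => ?_
  obtain ⟨p, hp, hpy⟩ := (h y).1
  have hxy := (abs_le.1 (abs_apply_le_norm_of_mem_delta (hD hp) (x - y))).2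
  rw [map_sub] at hxy
  rw [dist_eq_norm]
  linarith [(h x).2 p hp]

lemma itis {T : Linf → Linf} (hT : PosMap T) (hDT : D ⊆ DeltaT T)
    (hT1 : ∀ p ∈ D, p (T (cst 1)) ≤ 1) : ITIS T (fun x y => I y ≤ I x) := by
  intro x d hd
  obtain ⟨p, hp, hpx⟩ := (h (x + T d)).1
  obtain ⟨hpΔ, lam, hlam⟩ := hDT hp
  have hlam1 : p (T (cst 1)) = lam := by rw [hlam, hpΔ.2, mul_one]
  have hlam₀ : 0 ≤ lam := hlam1 ▸ hpΔ.1 _ (hT _ fun _ => zero_le_one)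
  have hlam_le : lam ≤ 1 := hlam1 ▸ hT1 p hp
  have hx := (h x).2 p hp
  have hxd := hd.trans ((h (x + d)).2 p hp)
  simp only [hpx, map_add, hlam] at hxd ⊢
  rcases le_total 0 (p d) with hd₀ | hd₀ <;> nlinarith

end MinForm

theorem stmt7_general (T : Linf → Linf) (hlin : IsLinearMap ℝ T) (hpos : PosMap T) :
    (∀ R : Linf → Linf → Prop, A15 R → ISU R → ITIS T R →
      ∃ D : Set Ba, D.Nonempty ∧ IsClosed D ∧ D ⊆ DeltaT T ∧
        ∃ I : Linf → ℝ, ConstEquiv R I ∧ Represents R I ∧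
          (∀ J : Linf → ℝ, ConstEquiv R J → J = I) ∧ MinForm D I) ∧
    ((∀ p ∈ DeltaT T, p (T (cst 1)) ≤ 1) →
      ∀ D : Set Ba, D.Nonempty → IsClosed D → D ⊆ DeltaT T →
        ∀ I : Linf → ℝ, MinForm D I →
          A15 (fun x y => I y ≤ I x) ∧ ISU (fun x y => I y ≤ I x) ∧
            ITIS T (fun x y => I y ≤ I x)) := by
  refine ⟨fun R h15 hisu hitis => ?_, fun hT1 D _ _ hDT I hI => ?_⟩
  · obtain ⟨h1, h2, h3, h4, h5⟩ := h15
    have hcst : ∀ a b, R (cst a) (cst b) → b ≤ a := fun a b => le_of_rel_cst h2 h4 hisu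
    obtain ⟨I, hI⟩ := exists_constEquiv h1 h2 h3
    have hrep := hI.represents h1 hcst h2
    rw [hrep.rel_eq] at hitis
    have hmin := (hI.isMaxminFunctional h1 hcst h2 h4 h5 hisu).minForm_core_inter_deltaT
      (T := hlin.mk' T) hpos hitis
    obtain ⟨p, hp, -⟩ := (hmin 0).1
    exact ⟨_, ⟨p, hp⟩, (isClosed_core I).inter (isClosed_deltaT T), Set.inter_subset_right,
      I, hI, hrep, fun J hJ => hI.unique h1 hcst hJ, hmin⟩
  · have hD : D ⊆ Delta := fun p hp => (hDT hp).1
    have hmax := hI.isMaxminFunctional hD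
    exact ⟨hmax.a15 (hI.lipschitzWith_one hD).continuous, hmax.isu,
      hI.itis hpos hDT fun p hp => hT1 p (hDT hp)⟩

/-- Proposition: maxmin over `Δ(T*)`. -/
theorem stmt7 (T : Linf → Linf) (hlin : IsLinearMap ℝ T) (hcont : Continuous T)
    (hpos : PosMap T) :
    (∀ R : Linf → Linf → Prop, A15 R → ISU R → ITIS T R →
      ∃ D : Set Ba, D.Nonempty ∧ IsClosed D ∧ D ⊆ DeltaT T ∧
        ∃ I : Linf → ℝ, ConstEquiv R I ∧ Represents R I ∧
          (∀ J : Linf → ℝ, ConstEquiv R J → J = I) ∧ MinForm D I) ∧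
    ((∀ p ∈ DeltaT T, p (T (cst 1)) ≤ 1) →
      ∀ D : Set Ba, D.Nonempty → IsClosed D → D ⊆ DeltaT T →
        ∀ I : Linf → ℝ, MinForm D I →
          A15 (fun x y => I y ≤ I x) ∧ ISU (fun x y => I y ≤ I x) ∧
            ITIS T (fun x y => I y ≤ I x)) :=
  stmt7_general T hlin hpos

end
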